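/- For G = 1/2 and q ∈ (0,1), the P_q index of the Gini-stable vector equals 𝓟_q(p^{(N,1/2)}) = (F_{⌊qN⌋} − q)/(1 − q) where F_k = (k/N)(1 + H_N − H_k); moreover if qN is an integer, this simplifies to (q/(1−q))·(H_N − H_{qN}), which converges to −q·log(q)/(1−q) as N → ∞ along integers N with qN ∈ ℕ. -/

import Mathlib

open Finset Real Filter

/-- Coefficient a_N(G) of the Gini-stable process. -/
noncomputable def giniA (G : ℝ) (N : ℕ) : ℝ :=
  (1 - G) / ((N : ℝ) * (G * ((N : ℝ) - 2) + 1))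

/-- Coefficient b_N(G) of the Gini-stable process. -/
noncomputable def giniB (G : ℝ) (N : ℕ) : ℝ :=
  G * ((N : ℝ) - 1) / (G * ((N : ℝ) - 2) + 1)

/-- Entries p_k^{(N,G)} of the Gini-stable process (1-indexed in k). -/
noncomputable def giniP (G : ℝ) : ℕ → ℕ → ℝ
  | 0, _ => 0
  | 1, k => if k = 1 then 1 else 0
  | N + 2, k =>
      giniA G (N + 2) + giniB G (N + 2) * (if k ≤ N + 1 then giniP G (N + 1) k else 0)

/-- Harmonic number H_m = ∑_{i=1}^m 1/i, with H 0 = 0. -/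
noncomputable def H (m : ℕ) : ℝ := ∑ i ∈ Finset.range m, (1 : ℝ) / (i + 1)

lemma H_succ (m : ℕ) : H (m + 1) = H m + 1 / (m + 1) := by
  simp [H, Finset.sum_range_succ]

lemma H_eq_harmonic (m : ℕ) : H m = (harmonic m : ℝ) := by
  simp [H, harmonic, one_div]

lemma sumP : ∀ N : ℕ, 1 ≤ N → ∀ k : ℕ, k ≤ N →
    ∑ i ∈ Finset.Icc 1 k, giniP (1/2) N i = ((k : ℝ) / N) * (1 + H N - H k) := by
  intro N
  induction N with
  | zero => omega
  | succ M ih =>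
    intro _ k hk
    match M, ih with
    | 0, _ =>
      interval_cases k
      · simp [H]
      · simp [giniP, H, Finset.sum_range_succ]
    | M' + 1, ih =>
      have hA : giniA (1/2) (M' + 2) = 1 / ((M' + 2 : ℝ) ^ 2) := by
        have h2 : (M' + 2 : ℝ) ≠ 0 := by positivity
        rw [giniA]
        push_cast
        rw [show (1/2:ℝ) * ((M':ℝ) + 2 - 2) + 1 = ((M':ℝ) + 2) / 2 by ring]
        field_simp
        ring
      have hB : giniB (1/2) (M' + 2) = (M' + 1 : ℝ) / (M' + 2 : ℝ) := by
        have h2 : (M' + 2 : ℝ) ≠ 0 := by positivity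
        rw [giniB]
        push_cast
        rw [show (1/2:ℝ) * ((M':ℝ) + 2 - 2) + 1 = ((M':ℝ) + 2) / 2 by ring]
        field_simp
        ring
      have key : ∀ j : ℕ, j ≤ M' + 1 →
          ∑ i ∈ Finset.Icc 1 j, giniP (1/2) (M' + 2) i =
            (j : ℝ) * giniA (1/2) (M'+2) + giniB (1/2) (M'+2) *
              ∑ i ∈ Finset.Icc 1 j, giniP (1/2) (M' + 1) i := by
        intro j hj
        rw [show (giniP (1/2) (M' + 2)) = fun i => giniA (1/2) (M'+2) + giniB (1/2) (M'+2) *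
          (if i ≤ M' + 1 then giniP (1/2) (M' + 1) i else 0) from rfl]
        rw [Finset.sum_add_distrib, Finset.sum_const, Finset.mul_sum, Nat.card_Icc]
        congr 1
        · simp
        apply Finset.sum_congr rfl
        intro i hi
        have : i ≤ M' + 1 := le_trans (Finset.mem_Icc.mp hi).2 hj
        simp [this]
      have hS := ih (by omega)
      have h2 : (M' + 2 : ℝ) ≠ 0 := by positivity
      have h1 : (M' + 1 : ℝ) ≠ 0 := by positivity
      rcases Nat.lt_or_ge k (M' + 2) with hlt | hge
      · have hk' : k ≤ M' + 1 := by omega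
        rw [key k hk', hS k hk', hA, hB]
        have : H (M' + 2) = H (M' + 1) + 1 / (M' + 2 : ℝ) := by
          rw [show M' + 2 = (M' + 1) + 1 from rfl, H_succ]; push_cast; ring
        rw [this]
        push_cast
        field_simp
        ring
      · have hkeq : k = M' + 2 := by omega
        subst hkeq
        rw [Finset.sum_Icc_succ_top (by omega : 1 ≤ M' + 2),
          key (M' + 1) le_rfl, hS (M' + 1) le_rfl]
        have hlast : giniP (1/2) (M' + 2) (M' + 2) = giniA (1/2) (M' + 2) := by
          show giniA (1/2) (M'+2) + giniB (1/2) (M'+2) *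
            (if M' + 2 ≤ M' + 1 then giniP (1/2) (M' + 1) (M'+2) else 0) = _
          simp
        rw [hlast, hA, hB]
        have hHH : H (M' + 2) = H (M' + 1) + 1 / (M' + 2 : ℝ) := by
          rw [show M' + 2 = (M' + 1) + 1 from rfl, H_succ]; push_cast; ring
        rw [hHH]
        push_cast
        field_simp
        ring

theorem stmt18 (q : ℝ) (hq0 : 0 < q) (hq1 : q < 1) :
    (∀ N : ℕ, 1 ≤ N →
      ((∑ i ∈ Finset.Icc 1 ⌊q * (N : ℝ)⌋₊, giniP (1/2) N i) - q) / (1 - q) =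
        (((⌊q * (N : ℝ)⌋₊ : ℝ) / (N : ℝ)) * (1 + H N - H ⌊q * (N : ℝ)⌋₊) - q) / (1 - q)) ∧
    (∀ N m : ℕ, 1 ≤ N → q * (N : ℝ) = (m : ℝ) →
      ((∑ i ∈ Finset.Icc 1 ⌊q * (N : ℝ)⌋₊, giniP (1/2) N i) - q) / (1 - q) =
        (q / (1 - q)) * (H N - H m)) ∧
    (∀ ε > (0:ℝ), ∃ N₀ : ℕ, ∀ N m : ℕ, N₀ ≤ N → q * (N : ℝ) = (m : ℝ) →
      |(q / (1 - q)) * (H N - H m) - (-q * Real.log q / (1 - q))| < ε) := by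
  have hfloor : ∀ N : ℕ, ⌊q * (N : ℝ)⌋₊ ≤ N := by
    intro N
    calc ⌊q * (N : ℝ)⌋₊ ≤ ⌊(N : ℝ)⌋₊ :=
          Nat.floor_le_floor (by nlinarith [Nat.cast_nonneg (α := ℝ) N])
      _ = N := Nat.floor_natCast N
  refine ⟨fun N hN => ?_, fun N m hN hm => ?_, fun ε hε => ?_⟩
  · rw [sumP N hN _ (hfloor N)]
  · have hNz : (N : ℝ) ≠ 0 := by positivity
    have hfl : ⌊q * (N : ℝ)⌋₊ = m := by rw [hm, Nat.floor_natCast]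
    have hmN : m ≤ N := by
      have : (m : ℝ) ≤ N := by nlinarith [Nat.cast_nonneg (α := ℝ) N]
      exact_mod_cast this
    rw [hfl] at *
    rw [sumP N hN m hmN]
    have hq : q = (m : ℝ) / N := by field_simp; exact hm
    have h1q : (1 : ℝ) - q ≠ 0 := by linarith
    rw [hq]
    field_simp
    ring
  · set L := Real.eulerMascheroniConstant
    set c := q / (1 - q) with hc
    have hcpos : 0 < c := div_pos hq0 (by linarith)
    have hε' : 0 < ε / (2 * c) := by positivity
    have htend := Real.tendsto_harmonic_sub_log
    rw [Metric.tendsto_atTop] at htend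
    obtain ⟨n₁, hn₁⟩ := htend (ε / (2 * c)) hε'
    set n₂ := max n₁ 1
    refine ⟨⌈(n₂ : ℝ) / q⌉₊ + 1, fun N m hNlb hm => ?_⟩
    have hNn2 : (n₂ : ℝ) / q ≤ N := le_trans (Nat.le_ceil _) (by exact_mod_cast Nat.le_of_succ_le hNlb)
    have hmn2 : (n₂ : ℝ) ≤ m := by
      rw [← hm]
      rw [div_le_iff₀ hq0] at hNn2
      linarith
    have hmge : n₂ ≤ m := by exact_mod_cast hmn2
    have hm1 : 1 ≤ m := le_trans (le_max_right _ _) hmge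
    have hmn1 : n₁ ≤ m := le_trans (le_max_left _ _) hmge
    have hNm : m ≤ N := by
      have : (m : ℝ) ≤ N := by nlinarith [Nat.cast_nonneg (α := ℝ) N, hm]
      exact_mod_cast this
    have hNn1 : n₁ ≤ N := le_trans hmn1 hNm
    have hNpos : 0 < N := lt_of_lt_of_le hm1 hNm
    have hmR : (0:ℝ) < m := by exact_mod_cast hm1
    have hNR : (0:ℝ) < N := by exact_mod_cast hNpos
    have hlogq : Real.log q = Real.log m - Real.log N := by
      have : q = (m : ℝ) / N := by field_simp; exact hm
      rw [this, Real.log_div (ne_of_gt hmR) (ne_of_gt hNR)]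
    have e1 := hn₁ N hNn1
    have e2 := hn₁ m hmn1
    rw [Real.dist_eq] at e1 e2
    have hHN : H N = (harmonic N : ℝ) := H_eq_harmonic N
    have hHm : H m = (harmonic m : ℝ) := H_eq_harmonic m
    have key : (q / (1 - q)) * (H N - H m) - (-q * Real.log q / (1 - q)) =
        c * (((harmonic N : ℝ) - Real.log N - L) - ((harmonic m : ℝ) - Real.log m - L)) := by
      rw [hHN, hHm, hlogq, hc]
      have h1q : (1 : ℝ) - q ≠ 0 := by linarith
      field_simp
      ring
    rw [key]
    calc |c * (((harmonic N : ℝ) - Real.log N - L) - ((harmonic m : ℝ) - Real.log m - L))|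
        = c * |((harmonic N : ℝ) - Real.log N - L) - ((harmonic m : ℝ) - Real.log m - L)| := by
          rw [abs_mul, abs_of_pos hcpos]
      _ ≤ c * (|(harmonic N : ℝ) - Real.log N - L| + |(harmonic m : ℝ) - Real.log m - L|) := by
          gcongr
          exact abs_sub _ _
      _ < c * (ε / (2 * c) + ε / (2 * c)) := by gcongr
      _ = ε := by field_simp; ring
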